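/- arXiv:1309.7091 — 3 statements merged into one kernel-verified Lean document; each statement's English description precedes it below -/
import Mathlib

section
/- The operator ω_ρ is a state on h ⊗ h: it is positive and has trace tr(ω_ρ) = tr(ρ) = 1. -/
open scoped InnerProductSpace

/-!
Put `Ω = ∑ᵢ eᵢ ⊗ √ρ eᵢ`; the series converges because `‖√ρ eᵢ‖² = ⟪eᵢ, ρ eᵢ⟫` is summable.
Then `⟪e_k ⊗ e_l, Ω⟫ = ⟪e_l, √ρ e_k⟫`, so the hypothesis on `W` says that `W` agrees with the
rank-one operator `|Ω⟩⟨Ω|` on the tensors `e_k ⊗ e_l`. These span a dense subspace, hence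
`W = |Ω⟩⟨Ω| ≥ 0`. Its diagonal entries are `|⟪√ρ e_k, e_l⟫|²`, and by Parseval their double sum
is `∑ₖ ‖√ρ e_k‖² = tr ρ = 1`.
-/

open InnerProductSpace RCLike

theorem ContinuousLinearMap.ext_on_image2
    {𝕜 E F G M : Type*} [NontriviallyNormedField 𝕜]
    [NormedAddCommGroup E] [NormedSpace 𝕜 E] [NormedAddCommGroup F] [NormedSpace 𝕜 F]
    [NormedAddCommGroup G] [NormedSpace 𝕜 G] [NormedAddCommGroup M] [NormedSpace 𝕜 M]
    (B : E →L[𝕜] F →L[𝕜] G)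
    (hB : (Submodule.span 𝕜 (Set.range fun p : E × F => B p.1 p.2)).topologicalClosure = ⊤)
    {s : Set E} (hs : (Submodule.span 𝕜 s).topologicalClosure = ⊤)
    {t : Set F} (ht : (Submodule.span 𝕜 t).topologicalClosure = ⊤)
    {S T : G →L[𝕜] M} (h : ∀ x ∈ s, ∀ y ∈ t, S (B x y) = T (B x y)) : S = T := by
  have h_left : ∀ x ∈ s, ∀ y, S (B x y) = T (B x y) := fun x hx =>
    DFunLike.congr_fun <| ext_on (f := S ∘L B x) (g := T ∘L B x)
      (Submodule.dense_iff_topologicalClosure_eq_top.mpr ht) (h x hx)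
  have h_all : ∀ x y, S (B x y) = T (B x y) := fun x y =>
    DFunLike.congr_fun (ext_on (f := S ∘L B.flip y) (g := T ∘L B.flip y)
      (Submodule.dense_iff_topologicalClosure_eq_top.mpr hs) fun x hx => h_left x hx y) x
  refine ext_on (Submodule.dense_iff_topologicalClosure_eq_top.mpr hB) ?_
  rintro _ ⟨⟨x, y⟩, rfl⟩
  exact h_all x y

theorem IsSelfAdjoint.inner_comp_self_apply {𝕜 E : Type*} [RCLike 𝕜] [NormedAddCommGroup E]
    [InnerProductSpace 𝕜 E] [CompleteSpace E] {T : E →L[𝕜] E} (hT : IsSelfAdjoint T) (x : E) :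
    ⟪x, (T ∘L T) x⟫_𝕜 = (‖T x‖ : 𝕜) ^ 2 := by
  rw [ContinuousLinearMap.comp_apply, ← ContinuousLinearMap.adjoint_inner_left, hT.adjoint_eq,
    inner_self_eq_norm_sq_to_K]

namespace HilbertBasis

variable {𝕜 E ι : Type*} [RCLike 𝕜] [NormedAddCommGroup E] [InnerProductSpace 𝕜 E]

theorem hasSum_norm_inner_sq (b : HilbertBasis ι 𝕜 E) (x : E) :
    HasSum (fun i => ‖⟪x, b i⟫_𝕜‖ ^ 2) (‖x‖ ^ 2) := by
  have h := b.hasSum_inner_mul_inner x x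
  simp_rw [← inner_conj_symm (b _) x, mul_conj, inner_self_eq_norm_sq_to_K] at h
  exact_mod_cast h

theorem hasSum_norm_inner_sq_prod (b : HilbertBasis ι 𝕜 E) {κ : Type*} {v : κ → E} {t : ℝ}
    (hv : HasSum (fun k => ‖v k‖ ^ 2) t) :
    HasSum (fun p : κ × ι => ‖⟪v p.1, b p.2⟫_𝕜‖ ^ 2) t := by
  have hfiber k := b.hasSum_norm_inner_sq (v k)
  have hsummable : Summable fun p : κ × ι => ‖⟪v p.1, b p.2⟫_𝕜‖ ^ 2 :=
    (summable_prod_of_nonneg fun _ => by positivity).mpr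
      ⟨fun k => (hfiber k).summable, by simpa only [(hfiber _).tsum_eq] using hv.summable⟩
  exact (hsummable.hasSum.prod_fiberwise hfiber).unique hv ▸ hsummable.hasSum

end HilbertBasis

section InnerMultiplicative

variable {𝕜 E F G : Type*} [RCLike 𝕜] [NormedAddCommGroup E] [InnerProductSpace 𝕜 E]
  [NormedAddCommGroup F] [InnerProductSpace 𝕜 F] [NormedAddCommGroup G] [InnerProductSpace 𝕜 G]
  {tp : E →ₗ[𝕜] F →ₗ[𝕜] G}

theorem LinearMap.norm_apply_apply_eq_mul
    (htp : ∀ u v u' v', ⟪tp u v, tp u' v'⟫_𝕜 = ⟪u, u'⟫_𝕜 * ⟪v, v'⟫_𝕜) (u : E) (v : F) :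
    ‖tp u v‖ = ‖u‖ * ‖v‖ := by
  have h := htp u v u v
  simp only [inner_self_eq_norm_sq_to_K, ← mul_pow] at h
  exact (pow_left_inj₀ (norm_nonneg _) (by positivity) two_ne_zero).mp (by exact_mod_cast h)

theorem ContinuousLinearMap.ext_on_basis_tensors
    (htp : ∀ u v u' v', ⟪tp u v, tp u' v'⟫_𝕜 = ⟪u, u'⟫_𝕜 * ⟪v, v'⟫_𝕜)
    (hdense : (Submodule.span 𝕜 (Set.range fun p : E × F => tp p.1 p.2)).topologicalClosure = ⊤)
    {ι κ : Type*} (e : HilbertBasis ι 𝕜 E) (f : HilbertBasis κ 𝕜 F)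
    {M : Type*} [NormedAddCommGroup M] [NormedSpace 𝕜 M] {S T : G →L[𝕜] M}
    (h : ∀ i j, S (tp (e i) (f j)) = T (tp (e i) (f j))) : S = T := by
  let B : E →L[𝕜] F →L[𝕜] G := tp.mkContinuous₂ 1 fun u v => by
    rw [tp.norm_apply_apply_eq_mul htp, one_mul]
  refine ext_on_image2 B hdense e.dense_span f.dense_span ?_
  rintro _ ⟨i, rfl⟩ _ ⟨j, rfl⟩
  exact h i j

variable [CompleteSpace G] {ι : Type*} {e : ι → E} {v : ι → F}

theorem LinearMap.summable_apply_apply_of_orthonormal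
    (htp : ∀ u v u' v', ⟪tp u v, tp u' v'⟫_𝕜 = ⟪u, u'⟫_𝕜 * ⟪v, v'⟫_𝕜)
    (he : Orthonormal 𝕜 e) (hv : Summable fun i => ‖v i‖ ^ 2) :
    Summable fun i => tp (e i) (v i) := by
  let V (i : ι) : F →ₗᵢ[𝕜] G :=
    ⟨tp (e i), fun y => by rw [tp.norm_apply_apply_eq_mul htp, he.1 i, one_mul]⟩
  have hV : OrthogonalFamily 𝕜 (fun _ : ι => F) V := fun i j hij y y' => by
    simp only [V, LinearIsometry.coe_mk, htp, he.2 hij, zero_mul]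
  exact (hV.summable_iff_norm_sq_summable v).mpr hv

theorem LinearMap.inner_apply_apply_tsum_of_orthonormal
    (htp : ∀ u v u' v', ⟪tp u v, tp u' v'⟫_𝕜 = ⟪u, u'⟫_𝕜 * ⟪v, v'⟫_𝕜)
    (he : Orthonormal 𝕜 e) (hv : Summable fun i => ‖v i‖ ^ 2) (k : ι) (y : F) :
    ⟪tp (e k) y, ∑' i, tp (e i) (v i)⟫_𝕜 = ⟪y, v k⟫_𝕜 := by
  calc ⟪tp (e k) y, ∑' i, tp (e i) (v i)⟫_𝕜 = ∑' i, ⟪tp (e k) y, tp (e i) (v i)⟫_𝕜 :=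
        ((tp.summable_apply_apply_of_orthonormal htp he hv).hasSum.mapL (innerSL 𝕜 _)).tsum_eq.symm
    _ = ⟪tp (e k) y, tp (e k) (v k)⟫_𝕜 :=
        tsum_eq_single k fun i hik => by rw [htp, he.2 hik.symm, zero_mul]
    _ = ⟪y, v k⟫_𝕜 := by rw [htp, inner_self_eq_norm_sq_to_K, he.1 k, ofReal_one, one_pow, one_mul]

end InnerMultiplicative

theorem omega_rho_is_state_general
    {H : Type*} [NormedAddCommGroup H] [InnerProductSpace ℂ H] [CompleteSpace H]
    {K : Type*} [NormedAddCommGroup K] [InnerProductSpace ℂ K] [CompleteSpace K]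
    (tp : H →ₗ[ℂ] H →ₗ[ℂ] K)
    (htp : ∀ u v u' v' : H, ⟪tp u v, tp u' v'⟫_ℂ = ⟪u, u'⟫_ℂ * ⟪v, v'⟫_ℂ)
    (hdense : (Submodule.span ℂ
        (Set.range fun uv : H × H => tp uv.1 uv.2)).topologicalClosure = ⊤)
    {ι : Type*} (e : HilbertBasis ι ℂ H)
    (ρ sq : H →L[ℂ] H)
    (hρtr : HasSum (fun i : ι => ⟪e i, ρ (e i)⟫_ℂ) 1)
    (hsqpos : sq.IsPositive) (hsq : sq ∘L sq = ρ)
    (W : K →L[ℂ] K)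
    (hW : ∀ p : ι × ι,
      W (tp (e p.1) (e p.2))
        = ⟪sq (e p.1), e p.2⟫_ℂ • ∑' i : ι, tp (e i) (sq (e i))) :
    W.IsPositive ∧
      HasSum (fun p : ι × ι =>
        ⟪tp (e p.1) (e p.2), W (tp (e p.1) (e p.2))⟫_ℂ) 1 := by
  have hnorm_sq : HasSum (fun i => ‖sq (e i)‖ ^ 2) 1 := by
    refine (hasSum_ofReal ℂ).mp ?_
    push_cast
    simpa only [← hsq, hsqpos.isSelfAdjoint.inner_comp_self_apply] using hρtr
  set Ω := ∑' i, tp (e i) (sq (e i))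
  have hΩ k l : ⟪tp (e k) (e l), Ω⟫_ℂ = ⟪e l, sq (e k)⟫_ℂ :=
    tp.inner_apply_apply_tsum_of_orthonormal htp e.orthonormal hnorm_sq.summable k (e l)
  have hW_eq : W = rankOne ℂ Ω Ω := ContinuousLinearMap.ext_on_basis_tensors htp hdense e e
    fun k l => by rw [hW (k, l), rankOne_apply, ← inner_conj_symm Ω, hΩ, inner_conj_symm]
  refine ⟨hW_eq ▸ isPositive_rankOne_self Ω, ?_⟩
  have hdiag (p : ι × ι) : ⟪tp (e p.1) (e p.2), W (tp (e p.1) (e p.2))⟫_ℂ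
      = ((‖⟪sq (e p.1), e p.2⟫_ℂ‖ ^ 2 : ℝ) : ℂ) := by
    rw [hW, inner_smul_right, hΩ, ← inner_conj_symm (e _), mul_conj]
    norm_cast
  simp only [hdiag]
  simpa using Complex.hasSum_ofReal.mpr (e.hasSum_norm_inner_sq_prod hnorm_sq)

/-- The operator `ω_ρ` is a state on `h ⊗ h`: it is positive and has trace
`tr(ω_ρ) = tr(ρ) = 1`. -/
theorem omega_rho_is_state
    {H : Type*} [NormedAddCommGroup H] [InnerProductSpace ℂ H] [CompleteSpace H]
    {K : Type*} [NormedAddCommGroup K] [InnerProductSpace ℂ K] [CompleteSpace K]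
    (tp : H →ₗ[ℂ] H →ₗ[ℂ] K)
    (htp : ∀ u v u' v' : H, ⟪tp u v, tp u' v'⟫_ℂ = ⟪u, u'⟫_ℂ * ⟪v, v'⟫_ℂ)
    (hdense : (Submodule.span ℂ
        (Set.range fun uv : H × H => tp uv.1 uv.2)).topologicalClosure = ⊤)
    {ι : Type*} (e : HilbertBasis ι ℂ H)
    (ρ sq : H →L[ℂ] H) (hρ : ρ.IsPositive)
    (hρtr : HasSum (fun i : ι => ⟪e i, ρ (e i)⟫_ℂ) 1)
    (hsqpos : sq.IsPositive) (hsq : sq ∘L sq = ρ)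
    (W : K →L[ℂ] K)
    (hW : ∀ p : ι × ι,
      W (tp (e p.1) (e p.2))
        = ⟪sq (e p.1), e p.2⟫_ℂ • ∑' i : ι, tp (e i) (sq (e i))) :
    W.IsPositive ∧
      HasSum (fun p : ι × ι =>
        ⟪tp (e p.1) (e p.2), W (tp (e p.1) (e p.2))⟫_ℂ) 1 :=
  omega_rho_is_state_general tp htp hdense e ρ sq hρtr hsqpos hsq W hW
end

section
/- If the range of ρ^{1/2} is dense in h, then the ρ-Choi-Jamiołkowski map Φ_* ↦ J_ρ(Φ_*) = (I ⊗ Φ_*)(ω_ρ) is injective on bounded completely positive maps on L₁(h). -/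
open scoped InnerProductSpace

theorem ContinuousLinearMap.ext_inner_self_apply {V : Type*} [NormedAddCommGroup V]
    [InnerProductSpace ℂ V] {S T : V →L[ℂ] V} (h : ∀ x, ⟪x, S x⟫_ℂ = ⟪x, T x⟫_ℂ) : S = T :=
  coe_injective <| (ext_inner_map (S : V →ₗ[ℂ] V) T).mp fun x => by
    rw [coe_coe, coe_coe, ← inner_conj_symm, h x, inner_conj_symm]

/-- `L₁(h)` is modelled by a Banach space `T₁` with an injective inclusion `ev` into `B(h)` in
which the operators `rk2 x x = |x⟩⟨x|` are total; `J_ρ(Φ_*)` is given by its quadratic form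
on simple tensors. That form at `u ⊗ v` is the quadratic form of `Φ_*|x⟩⟨x|` at `v` with
`x = ρ^{1/2} θ u`, and `ρ^{1/2} ∘ θ` is onto, so `J_ρ(Φ_*)` fixes `Φ_*` on a total set. -/
theorem jamiolkowski_injective_general
    {H : Type*} [NormedAddCommGroup H] [InnerProductSpace ℂ H]
    {K : Type*} [NormedAddCommGroup K] [InnerProductSpace ℂ K]
    (tp : H →ₗ[ℂ] H →ₗ[ℂ] K)
    (θ : H → H)
    (hbij : Function.Bijective θ)
    (sq : H →L[ℂ] H)
    (hrange : Set.range sq = Set.univ)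
    {T₁ : Type*} [NormedAddCommGroup T₁] [NormedSpace ℂ T₁]
    (ev : T₁ →L[ℂ] (H →L[ℂ] H)) (hev : Function.Injective ev)
    (rk2 : H → H → T₁)
    (hspan : (Submodule.span ℂ {z : T₁ | ∃ x : H, z = rk2 x x}).topologicalClosure = ⊤)
    (Φ Ψ : T₁ →L[ℂ] T₁)
    (WΦ WΨ : K →L[ℂ] K)
    (hWΦ : ∀ u v : H, ⟪tp u v, WΦ (tp u v)⟫_ℂ
      = ⟪v, (ev (Φ (rk2 (sq (θ u)) (sq (θ u))))) v⟫_ℂ)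
    (hWΨ : ∀ u v : H, ⟪tp u v, WΨ (tp u v)⟫_ℂ
      = ⟪v, (ev (Ψ (rk2 (sq (θ u)) (sq (θ u))))) v⟫_ℂ)
    (hJeq : WΦ = WΨ) :
    Φ = Ψ := by
  have hsurj : Function.Surjective (sq ∘ θ) :=
    (Set.range_eq_univ.mp hrange).comp hbij.surjective
  refine ContinuousLinearMap.ext_on (Submodule.dense_iff_topologicalClosure_eq_top.mpr hspan) ?_
  rintro _ ⟨x, rfl⟩
  obtain ⟨u, rfl⟩ := hsurj x
  refine hev (ContinuousLinearMap.ext_inner_self_apply fun v => ?_)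
  rw [Function.comp_apply, ← hWΦ, ← hWΨ, hJeq]

/-- If the range of `ρ^{1/2}` is all of `h`, then the `ρ`-Choi-Jamiołkowski map
`Φ_* ↦ J_ρ(Φ_*) = (I ⊗ Φ_*)(ω_ρ)` is injective on bounded completely positive maps on
`L₁(h)`.  The trace-class space `L₁(h)` is axiomatized as a Banach space `T₁` with an
injective continuous inclusion `ev` into `B(h)`, containing the rank-one operators
`rk2 x y = |x⟩⟨y|` whose "diagonal" elements `|x⟩⟨x|` are total in `T₁`; the CJ operators
`WΦ = J_ρ(Φ_*)`, `WΨ = J_ρ(Ψ_*)` are given by their quadratic forms on simple tensors. -/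
theorem jamiolkowski_injective
    {H : Type*} [NormedAddCommGroup H] [InnerProductSpace ℂ H] [CompleteSpace H]
    {K : Type*} [NormedAddCommGroup K] [InnerProductSpace ℂ K] [CompleteSpace K]
    (tp : H →ₗ[ℂ] H →ₗ[ℂ] K)
    (htp : ∀ u v u' v' : H, ⟪tp u v, tp u' v'⟫_ℂ = ⟪u, u'⟫_ℂ * ⟪v, v'⟫_ℂ)
    {ι : Type*} (e : HilbertBasis ι ℂ H)
    (θ : H → H)
    (hbij : Function.Bijective θ)
    (hadd : ∀ u v : H, θ (u + v) = θ u + θ v)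
    (hsmul : ∀ (c : ℂ) (u : H), θ (c • u) = (starRingEnd ℂ c) • θ u)
    (hinner : ∀ u v : H, ⟪θ u, θ v⟫_ℂ = ⟪v, u⟫_ℂ)
    (hθe : ∀ i : ι, θ (e i) = e i)
    (ρ sq : H →L[ℂ] H) (hρ : ρ.IsPositive)
    (hρtr : HasSum (fun i : ι => ⟪e i, ρ (e i)⟫_ℂ) 1)
    (hsqpos : sq.IsPositive) (hsq : sq ∘L sq = ρ)
    (hrange : Set.range sq = Set.univ)
    {T₁ : Type*} [NormedAddCommGroup T₁] [NormedSpace ℂ T₁] [CompleteSpace T₁]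
    (ev : T₁ →L[ℂ] (H →L[ℂ] H)) (hev : Function.Injective ev)
    (rk2 : H → H → T₁)
    (hrk2 : ∀ x y : H, ev (rk2 x y) = ((innerSL ℂ) y).smulRight x)
    (hspan : (Submodule.span ℂ {z : T₁ | ∃ x : H, z = rk2 x x}).topologicalClosure = ⊤)
    (Φ Ψ : T₁ →L[ℂ] T₁)
    (WΦ WΨ : K →L[ℂ] K)
    (hWΦ : ∀ u v : H, ⟪tp u v, WΦ (tp u v)⟫_ℂ
      = ⟪v, (ev (Φ (rk2 (sq (θ u)) (sq (θ u))))) v⟫_ℂ)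
    (hWΨ : ∀ u v : H, ⟪tp u v, WΨ (tp u v)⟫_ℂ
      = ⟪v, (ev (Ψ (rk2 (sq (θ u)) (sq (θ u))))) v⟫_ℂ)
    (hJeq : WΦ = WΨ) :
    Φ = Ψ :=
  jamiolkowski_injective_general tp θ hbij sq hrange ev hev rk2 hspan Φ Ψ WΦ WΨ hWΦ hWΨ hJeq
end

section
/- The ρ-Choi-Jamiołkowski operators with respect to two orthonormal bases related by a unitary U satisfy J'_ρ(Φ_*) = (UθU*θ ⊗ I) J_ρ(Φ_*) (UθU*θ ⊗ I)*; consequently, the relative entropy S(J_ρ(Φ_*), J_ρ(Ψ_*)) between the ρ-Choi-Jamiołkowski states of two trace-preserving CP maps does not depend on the choice of orthonormal basis. -/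
/-!
A Choi operator is determined by its entries `⟪eᵢ ⊗ eⱼ, J (eₖ ⊗ eₗ)⟫`, and the work is to extend
the entry formula off the basis. The Kraus sum `∑ₙ ⟪b, Lₙ w⟫ ⟪Lₙ z, d⟫` is the `ℓ²(ℕ, ℂ)` inner
product of the coefficient vectors `(⟪Lₙ w, b⟫)ₙ` and `(⟪Lₙ z, d⟫)ₙ`. With `w = sq θa`, `z = sq θc`,
both sides of `⟪a ⊗ b, J (c ⊗ d)⟫ = ∑ₙ ⟪b, Lₙ sq θa⟫ ⟪Lₙ sq θc, d⟫` are therefore inner products of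
continuous bilinear expressions in `(a, b)` and `(c, d)`, and the identity extends from the basis
to all vectors.

For the basis `U eᵢ` the conjugation is `θ' = UθU*`. Both `θ` and `θ'` are antiunitary
involutions, so `W = θ'θ` is unitary with `W⁻¹ = θθ'`, and `VK = W ⊗ I` is unitary with
`VK* = W⁻¹ ⊗ I`. Hence `⟪x, VK J VK* y⟫` is given by the entry formula of `J` with `θW⁻¹ = θ'` in
place of `θ`, which is the entry formula of `J'`. Unitary invariance of `S` gives the second claim.
-/

open scoped InnerProductSpace lp

open Set Submodule ContinuousLinearMap

section Antiunitary

variable {H : Type*} [NormedAddCommGroup H] [InnerProductSpace ℂ H]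

noncomputable def LinearIsometry.ofInnerConj (θ : H → H) (hadd : ∀ u v, θ (u + v) = θ u + θ v)
    (hsmul : ∀ (c : ℂ) u, θ (c • u) = starRingEnd ℂ c • θ u)
    (hinner : ∀ u v, ⟪θ u, θ v⟫_ℂ = ⟪v, u⟫_ℂ) : H →ₗᵢ⋆[ℂ] H where
  toFun := θ
  map_add' := hadd
  map_smul' := hsmul
  norm_map' u := by
    change ‖θ u‖ = ‖u‖
    rw [norm_eq_sqrt_re_inner (𝕜 := ℂ), hinner, ← norm_eq_sqrt_re_inner]

@[simp]
theorem LinearIsometry.coe_ofInnerConj (θ : H → H) (hadd : ∀ u v, θ (u + v) = θ u + θ v)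
    (hsmul : ∀ (c : ℂ) u, θ (c • u) = starRingEnd ℂ c • θ u)
    (hinner : ∀ u v, ⟪θ u, θ v⟫_ℂ = ⟪v, u⟫_ℂ) : ⇑(ofInnerConj θ hadd hsmul hinner) = θ :=
  rfl

theorem LinearIsometry.involutive_of_eqOn_dense_span {ι : Type*} (Θ : H →ₗᵢ⋆[ℂ] H)
    {v : ι → H} (hv : Dense (span ℂ (range v) : Set H)) (hΘ : ∀ i, Θ (v i) = v i) :
    Function.Involutive Θ := by
  have : (Θ.toContinuousLinearMap.comp Θ.toContinuousLinearMap : H →L[ℂ] H) = .id ℂ H :=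
    ext_on hv (by rintro _ ⟨i, rfl⟩; simp [hΘ])
  exact fun u => congr($this u)

noncomputable def LinearIsometryEquiv.ofInvolutions (Θ₁ Θ₂ : H →ₗᵢ⋆[ℂ] H)
    (h₁ : Function.Involutive Θ₁) (h₂ : Function.Involutive Θ₂) : H ≃ₗᵢ[ℂ] H where
  toLinearMap := (Θ₂.comp Θ₁).toLinearMap
  invFun u := Θ₁ (Θ₂ u)
  left_inv u := by simp [h₂ _, h₁ _]
  right_inv u := by simp [h₂ _, h₁ _]
  norm_map' := (Θ₂.comp Θ₁).norm_map

end Antiunitary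

section Kraus

variable {H : Type*} [NormedAddCommGroup H] [InnerProductSpace ℂ H] {L : ℕ → H →L[ℂ] H}

-- A divergent series has `tsum` zero, so divergence would force `x = 0`.
theorem summable_norm_sq_of_tsum_eq {x : H} (hx : ∑' n, ‖L n x‖ ^ 2 = ‖x‖ ^ 2) :
    Summable fun n => ‖L n x‖ ^ 2 := by
  by_contra hs
  have hx0 : x = 0 := by
    rw [tsum_eq_zero_of_not_summable hs] at hx
    simpa using hx.symm
  exact hs (by simp [hx0])

theorem summable_norm_inner_apply_sq {w : H} (hw : Summable fun n => ‖L n w‖ ^ 2) (b : H) :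
    Summable fun n => ‖⟪L n w, b⟫_ℂ‖ ^ 2 :=
  .of_nonneg_of_le (fun n => by positivity)
    (fun n => pow_le_pow_left₀ (norm_nonneg _) (norm_inner_le_norm _ _) 2)
    ((hw.mul_right (‖b‖ ^ 2)).congr fun n => (mul_pow ..).symm)

theorem memℓp_inner_apply {w : H} (hw : Summable fun n => ‖L n w‖ ^ 2) (b : H) :
    Memℓp (fun n => ⟪L n w, b⟫_ℂ) 2 :=
  (memℓp_gen_iff (by norm_num)).2 (by
    simpa only [ENNReal.toReal_ofNat, Real.rpow_two] using summable_norm_inner_apply_sq hw b)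

theorem tsum_norm_inner_apply_sq_le {w : H} (hw : ∑' n, ‖L n w‖ ^ 2 = ‖w‖ ^ 2) (b : H) :
    ∑' n, ‖⟪L n w, b⟫_ℂ‖ ^ 2 ≤ (‖w‖ * ‖b‖) ^ 2 := by
  have hw' := summable_norm_sq_of_tsum_eq hw
  rw [mul_pow, ← hw, ← tsum_mul_right]
  refine (summable_norm_inner_apply_sq hw' b).tsum_le_tsum (fun n => ?_) (hw'.mul_right _)
  rw [← mul_pow]
  exact pow_le_pow_left₀ (norm_nonneg _) (norm_inner_le_norm _ _) 2

noncomputable def krausCoeffs (L : ℕ → H →L[ℂ] H) (hL : ∀ x, ∑' n, ‖L n x‖ ^ 2 = ‖x‖ ^ 2) :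
    H →L⋆[ℂ] H →L[ℂ] ℓ²(ℕ, ℂ) :=
  (LinearMap.mk₂'ₛₗ (starRingEnd ℂ) (RingHom.id ℂ)
    (fun w b => (⟨fun n => ⟪L n w, b⟫_ℂ,
      memℓp_inner_apply (summable_norm_sq_of_tsum_eq (hL w)) b⟩ : ℓ²(ℕ, ℂ)))
    (fun w w' b => by ext n; simp; rfl)
    (fun c w b => by ext n; simp [mul_comm])
    (fun w b b' => by ext n; simp; rfl)
    (fun c w b => by ext n; simp)).mkContinuous₂ 1 fun w b => by
      rw [one_mul]
      refine lp.norm_le_of_tsum_le (by norm_num) (by positivity) ?_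
      simpa only [ENNReal.toReal_ofNat, Real.rpow_two, LinearMap.mk₂'ₛₗ_apply]
        using tsum_norm_inner_apply_sq_le (hL w) b

theorem inner_krausCoeffs (hL : ∀ x, ∑' n, ‖L n x‖ ^ 2 = ‖x‖ ^ 2) (w b z d : H) :
    ⟪krausCoeffs L hL w b, krausCoeffs L hL z d⟫_ℂ = ∑' n, ⟪b, L n w⟫_ℂ * ⟪L n z, d⟫_ℂ := by
  rw [lp.inner_eq_tsum]
  refine tsum_congr fun n => ?_
  simp [krausCoeffs, RCLike.inner_apply, mul_comm]

end Kraus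

section DenseFamily

variable {ι H : Type*} [NormedAddCommGroup H] [InnerProductSpace ℂ H] {v : ι → H}

theorem dense_span_range_comp (hv : Dense (span ℂ (range v) : Set H)) (U : H ≃ₗᵢ[ℂ] H) :
    Dense (span ℂ (range (U ∘ v)) : Set H) := by
  rw [range_comp, ← LinearIsometryEquiv.coe_toLinearEquiv, ← LinearEquiv.coe_toLinearMap,
    span_image, map_coe]
  exact U.surjective.denseRange.dense_image U.continuous hv

theorem ContinuousLinearMap.ext_on_range₂ {E : Type*} [NormedAddCommGroup E] [NormedSpace ℂ E]
    (hv : Dense (span ℂ (range v) : Set H)) {B₁ B₂ : H →L[ℂ] H →L[ℂ] E}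
    (h : ∀ i j, B₁ (v i) (v j) = B₂ (v i) (v j)) : B₁ = B₂ :=
  ext_on hv (by rintro _ ⟨i, rfl⟩; exact ext_on hv (by rintro _ ⟨j, rfl⟩; exact h i j))

theorem inner_apply_apply_eq_of_eq_on_range {E₁ E₂ : Type*} [NormedAddCommGroup E₁]
    [InnerProductSpace ℂ E₁] [NormedAddCommGroup E₂] [InnerProductSpace ℂ E₂]
    (hv : Dense (span ℂ (range v) : Set H))
    (F₁ G₁ : H →L[ℂ] H →L[ℂ] E₁) (F₂ G₂ : H →L[ℂ] H →L[ℂ] E₂)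
    (h : ∀ i j k l, ⟪F₁ (v i) (v j), G₁ (v k) (v l)⟫_ℂ = ⟪F₂ (v i) (v j), G₂ (v k) (v l)⟫_ℂ)
    (a b c d : H) : ⟪F₁ a b, G₁ c d⟫_ℂ = ⟪F₂ a b, G₂ c d⟫_ℂ := by
  have hcd : ∀ i j c d, ⟪F₁ (v i) (v j), G₁ c d⟫_ℂ = ⟪F₂ (v i) (v j), G₂ c d⟫_ℂ := by
    intro i j c d
    have := ext_on_range₂ hv (B₁ := compL ℂ H E₁ ℂ (innerSL ℂ (F₁ (v i) (v j))) ∘L G₁)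
      (B₂ := compL ℂ H E₂ ℂ (innerSL ℂ (F₂ (v i) (v j))) ∘L G₂) (by simpa using h i j)
    simpa using congr($this c d)
  have := ext_on_range₂ hv (B₁ := compL ℂ H E₁ ℂ (innerSL ℂ (G₁ c d)) ∘L F₁)
    (B₂ := compL ℂ H E₂ ℂ (innerSL ℂ (G₂ c d)) ∘L F₂)
    (fun i j => by simpa using congr(starRingEnd ℂ $(hcd i j c d)))
  simpa using congr(starRingEnd ℂ ($this a b))

end DenseFamily

section TensorProduct

variable {H K : Type*} [NormedAddCommGroup H] [InnerProductSpace ℂ H]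
  [NormedAddCommGroup K] [InnerProductSpace ℂ K]

theorem LinearMap.norm_apply₂_eq_mul {tp : H →ₗ[ℂ] H →ₗ[ℂ] K}
    (htp : ∀ u v u' v', ⟪tp u v, tp u' v'⟫_ℂ = ⟪u, u'⟫_ℂ * ⟪v, v'⟫_ℂ) (u v : H) :
    ‖tp u v‖ = ‖u‖ * ‖v‖ := by
  have h := htp u v u v
  simp only [inner_self_eq_norm_sq_to_K] at h
  exact (pow_left_inj₀ (norm_nonneg _) (by positivity) two_ne_zero).1
    (by rw [mul_pow]; exact_mod_cast h)

variable (T : H →L[ℂ] H →L[ℂ] K)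

theorem eq_of_forall_inner_apply_apply_eq
    (hT : Dense (span ℂ (range fun p : H × H => T p.1 p.2) : Set K)) {x y : K}
    (h : ∀ u v, ⟪T u v, x⟫_ℂ = ⟪T u v, y⟫_ℂ) : x = y := by
  have : innerSL ℂ x = innerSL ℂ y :=
    ext_on hT (by
      rintro _ ⟨⟨u, v⟩, rfl⟩
      simp only [innerSL_apply_apply]
      rw [← inner_conj_symm, h, inner_conj_symm])
  exact ext_inner_right ℂ fun z => congr($this z)

theorem ContinuousLinearMap.ext_of_inner_apply_apply
    (hT : Dense (span ℂ (range fun p : H × H => T p.1 p.2) : Set K)) {A B : K →L[ℂ] K}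
    (h : ∀ a b c d, ⟪T a b, A (T c d)⟫_ℂ = ⟪T a b, B (T c d)⟫_ℂ) : A = B :=
  ext_on hT (by
    rintro _ ⟨⟨c, d⟩, rfl⟩
    exact eq_of_forall_inner_apply_apply_eq T hT fun a b => h a b c d)

variable [CompleteSpace K] {A : K →L[ℂ] K}

theorem adjoint_apply_apply_of_apply_apply
    (hT : Dense (span ℂ (range fun p : H × H => T p.1 p.2) : Set K))
    (hTinner : ∀ u v u' v', ⟪T u v, T u' v'⟫_ℂ = ⟪u, u'⟫_ℂ * ⟪v, v'⟫_ℂ) (W : H ≃ₗᵢ[ℂ] H)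
    (hA : ∀ u v, A (T u v) = T (W u) v) (u v : H) : adjoint A (T u v) = T (W.symm u) v :=
  eq_of_forall_inner_apply_apply_eq T hT fun u' v' => by
    rw [adjoint_inner_right, hA, hTinner, hTinner, W.inner_map_eq_flip]

theorem adjoint_comp_self_of_apply_apply
    (hT : Dense (span ℂ (range fun p : H × H => T p.1 p.2) : Set K))
    (hTinner : ∀ u v u' v', ⟪T u v, T u' v'⟫_ℂ = ⟪u, u'⟫_ℂ * ⟪v, v'⟫_ℂ) (W : H ≃ₗᵢ[ℂ] H)
    (hA : ∀ u v, A (T u v) = T (W u) v) : adjoint A ∘L A = 1 :=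
  ext_on hT (by
    rintro _ ⟨⟨u, v⟩, rfl⟩
    simp [hA, adjoint_apply_apply_of_apply_apply T hT hTinner W hA])

theorem self_comp_adjoint_of_apply_apply
    (hT : Dense (span ℂ (range fun p : H × H => T p.1 p.2) : Set K))
    (hTinner : ∀ u v u' v', ⟪T u v, T u' v'⟫_ℂ = ⟪u, u'⟫_ℂ * ⟪v, v'⟫_ℂ) (W : H ≃ₗᵢ[ℂ] H)
    (hA : ∀ u v, A (T u v) = T (W u) v) : A ∘L adjoint A = 1 :=
  ext_on hT (by
    rintro _ ⟨⟨u, v⟩, rfl⟩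
    simp [hA, adjoint_apply_apply_of_apply_apply T hT hTinner W hA])

end TensorProduct

section Choi

variable {H K : Type*} [NormedAddCommGroup H] [InnerProductSpace ℂ H]
  [NormedAddCommGroup K] [InnerProductSpace ℂ K]
  (T : H →L[ℂ] H →L[ℂ] K) (sq : H →L[ℂ] H) {L : ℕ → H →L[ℂ] H}

theorem inner_choi_eq_tsum (hL : ∀ x, ∑' n, ‖L n x‖ ^ 2 = ‖x‖ ^ 2) {ι : Type*} {v : ι → H}
    (hv : Dense (span ℂ (range v) : Set H)) (Θ : H →ₗᵢ⋆[ℂ] H) (hΘ : ∀ i, Θ (v i) = v i)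
    (J : K →L[ℂ] K)
    (hJ : ∀ i j k l, ⟪T (v i) (v j), J (T (v k) (v l))⟫_ℂ
      = ∑' n, ⟪v j, L n (sq (v i))⟫_ℂ * ⟪L n (sq (v k)), v l⟫_ℂ) (a b c d : H) :
    ⟪T a b, J (T c d)⟫_ℂ = ∑' n, ⟪b, L n (sq (Θ a))⟫_ℂ * ⟪L n (sq (Θ c)), d⟫_ℂ := by
  let S : H →L[ℂ] H →L[ℂ] ℓ²(ℕ, ℂ) := (krausCoeffs L hL).comp (sq.comp Θ.toContinuousLinearMap)
  have := inner_apply_apply_eq_of_eq_on_range hv T (compL ℂ H K K J ∘L T) S S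
    (fun i j k l => by simpa [S, inner_krausCoeffs, hΘ] using hJ i j k l) a b c d
  simpa [S, inner_krausCoeffs] using this

theorem choi_eq_conj_of_conjugations [CompleteSpace K] (hL : ∀ x, ∑' n, ‖L n x‖ ^ 2 = ‖x‖ ^ 2)
    (hT : Dense (span ℂ (range fun p : H × H => T p.1 p.2) : Set K))
    (hTinner : ∀ u v u' v', ⟪T u v, T u' v'⟫_ℂ = ⟪u, u'⟫_ℂ * ⟪v, v'⟫_ℂ)
    {ι ι' : Type*} {v : ι → H} {v' : ι' → H} (hv : Dense (span ℂ (range v) : Set H))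
    (hv' : Dense (span ℂ (range v') : Set H)) (Θ Θ' : H →ₗᵢ⋆[ℂ] H)
    (hΘ : ∀ i, Θ (v i) = v i) (hΘ' : ∀ i, Θ' (v' i) = v' i) (J J' : K →L[ℂ] K)
    (hJ : ∀ i j k l, ⟪T (v i) (v j), J (T (v k) (v l))⟫_ℂ
      = ∑' n, ⟪v j, L n (sq (v i))⟫_ℂ * ⟪L n (sq (v k)), v l⟫_ℂ)
    (hJ' : ∀ i j k l, ⟪T (v' i) (v' j), J' (T (v' k) (v' l))⟫_ℂ
      = ∑' n, ⟪v' j, L n (sq (v' i))⟫_ℂ * ⟪L n (sq (v' k)), v' l⟫_ℂ)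
    (W : H ≃ₗᵢ[ℂ] H) (hW : ∀ u, Θ (W.symm u) = Θ' u)
    {V : K →L[ℂ] K} (hV : ∀ u w, V (T u w) = T (W u) w) :
    J' = V ∘L J ∘L adjoint V := by
  have hV' := adjoint_apply_apply_of_apply_apply T hT hTinner W hV
  refine ext_of_inner_apply_apply T hT fun a b c d => ?_
  rw [comp_apply, comp_apply, ← adjoint_inner_left V, hV', hV',
    inner_choi_eq_tsum T sq hL hv Θ hΘ J hJ, inner_choi_eq_tsum T sq hL hv' Θ' hΘ' J' hJ', hW, hW]

end Choi

theorem jamiolkowski_relative_entropy_basis_independent_general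
    {H : Type*} [NormedAddCommGroup H] [InnerProductSpace ℂ H] [CompleteSpace H]
    {K : Type*} [NormedAddCommGroup K] [InnerProductSpace ℂ K] [CompleteSpace K]
    (tp : H →ₗ[ℂ] H →ₗ[ℂ] K)
    (htp : ∀ u v u' v' : H, ⟪tp u v, tp u' v'⟫_ℂ = ⟪u, u'⟫_ℂ * ⟪v, v'⟫_ℂ)
    (hdense : (Submodule.span ℂ
        (Set.range fun uv : H × H => tp uv.1 uv.2)).topologicalClosure = ⊤)
    {ι : Type*} (e : HilbertBasis ι ℂ H)
    (θ : H → H)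
    (hadd : ∀ u v : H, θ (u + v) = θ u + θ v)
    (hsmul : ∀ (c : ℂ) (u : H), θ (c • u) = (starRingEnd ℂ c) • θ u)
    (hinner : ∀ u v : H, ⟪θ u, θ v⟫_ℂ = ⟪v, u⟫_ℂ)
    (hθe : ∀ i : ι, θ (e i) = e i)
    (sq : H →L[ℂ] H)
    (L M : ℕ → H →L[ℂ] H)
    (hLtp : ∀ x : H, (∑' n : ℕ, ‖(L n) x‖ ^ 2) = ‖x‖ ^ 2)
    (hMtp : ∀ x : H, (∑' n : ℕ, ‖(M n) x‖ ^ 2) = ‖x‖ ^ 2)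
    (U : H ≃ₗᵢ[ℂ] H)
    (JΦ JΨ JΦ' JΨ' : K →L[ℂ] K)
    (hJΦ : ∀ p q : ι × ι,
      ⟪tp (e p.1) (e p.2), JΦ (tp (e q.1) (e q.2))⟫_ℂ
        = ∑' n : ℕ, ⟪e p.2, L n (sq (e p.1))⟫_ℂ *
            ⟪sq (e q.1), (ContinuousLinearMap.adjoint (L n)) (e q.2)⟫_ℂ)
    (hJΨ : ∀ p q : ι × ι,
      ⟪tp (e p.1) (e p.2), JΨ (tp (e q.1) (e q.2))⟫_ℂ
        = ∑' n : ℕ, ⟪e p.2, M n (sq (e p.1))⟫_ℂ *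
            ⟪sq (e q.1), (ContinuousLinearMap.adjoint (M n)) (e q.2)⟫_ℂ)
    (hJΦ' : ∀ p q : ι × ι,
      ⟪tp (U (e p.1)) (U (e p.2)), JΦ' (tp (U (e q.1)) (U (e q.2)))⟫_ℂ
        = ∑' n : ℕ, ⟪U (e p.2), L n (sq (U (e p.1)))⟫_ℂ *
            ⟪sq (U (e q.1)), (ContinuousLinearMap.adjoint (L n)) (U (e q.2))⟫_ℂ)
    (hJΨ' : ∀ p q : ι × ι,
      ⟪tp (U (e p.1)) (U (e p.2)), JΨ' (tp (U (e q.1)) (U (e q.2)))⟫_ℂ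
        = ∑' n : ℕ, ⟪U (e p.2), M n (sq (U (e p.1)))⟫_ℂ *
            ⟪sq (U (e q.1)), (ContinuousLinearMap.adjoint (M n)) (U (e q.2))⟫_ℂ)
    (VK : K →L[ℂ] K)
    (hVK : ∀ u v : H, VK (tp u v) = tp (U (θ (U.symm (θ u)))) v)
    (S : (K →L[ℂ] K) → (K →L[ℂ] K) → ℝ)
    (hS : ∀ V A B : K →L[ℂ] K,
      V ∘L (ContinuousLinearMap.adjoint V) = 1 →
      (ContinuousLinearMap.adjoint V) ∘L V = 1 →
      S (V ∘L A ∘L (ContinuousLinearMap.adjoint V))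
          (V ∘L B ∘L (ContinuousLinearMap.adjoint V)) = S A B) :
    JΦ' = VK ∘L JΦ ∘L (ContinuousLinearMap.adjoint VK) ∧
      S JΦ' JΨ' = S JΦ JΨ := by
  let T : H →L[ℂ] H →L[ℂ] K :=
    tp.mkContinuous₂ 1 fun u v => by rw [one_mul, LinearMap.norm_apply₂_eq_mul htp]
  have hT : Dense (span ℂ (range fun p : H × H => T p.1 p.2) : Set K) :=
    dense_iff_topologicalClosure_eq_top.2 hdense
  have he : Dense (span ℂ (range e) : Set H) := dense_iff_topologicalClosure_eq_top.2 e.dense_span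
  let Θ := LinearIsometry.ofInnerConj θ hadd hsmul hinner
  let Θ' : H →ₗᵢ⋆[ℂ] H := U.toLinearIsometry.comp (Θ.comp U.symm.toLinearIsometry)
  have hΘ : Function.Involutive Θ := Θ.involutive_of_eqOn_dense_span he hθe
  have hΘ' : Function.Involutive Θ' := fun u => by simp [Θ', hΘ _]
  let W := LinearIsometryEquiv.ofInvolutions Θ Θ' hΘ hΘ'
  have hVW : ∀ u v, VK (T u v) = T (W u) v := hVK
  have hJ'_eq (L : ℕ → H →L[ℂ] H) hL J J' hJ hJ' :=
    choi_eq_conj_of_conjugations T sq (L := L) hL hT htp he (dense_span_range_comp he U) Θ Θ' hθe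
      (fun i => by simp [Θ', Θ, hθe]) J J' hJ hJ' W (fun u => hΘ _) hVW
  have hΦ : JΦ' = VK ∘L JΦ ∘L adjoint VK :=
    hJ'_eq L hLtp JΦ JΦ' (fun i j k l => by simpa [T, adjoint_inner_right] using hJΦ (i, j) (k, l))
      (fun i j k l => by simpa [T, adjoint_inner_right] using hJΦ' (i, j) (k, l))
  have hΨ : JΨ' = VK ∘L JΨ ∘L adjoint VK :=
    hJ'_eq M hMtp JΨ JΨ' (fun i j k l => by simpa [T, adjoint_inner_right] using hJΨ (i, j) (k, l))
      (fun i j k l => by simpa [T, adjoint_inner_right] using hJΨ' (i, j) (k, l))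
  refine ⟨hΦ, ?_⟩
  rw [hΦ, hΨ]
  exact hS VK JΦ JΨ (self_comp_adjoint_of_apply_apply T hT htp W hVW)
    (adjoint_comp_self_of_apply_apply T hT htp W hVW)

/-- The `ρ`-Choi-Jamiołkowski operators with respect to two orthonormal bases related by a
unitary `U` satisfy `J'_ρ(Φ_*) = (UθU*θ ⊗ I) J_ρ(Φ_*) (UθU*θ ⊗ I)*`; consequently, the
relative entropy `S(J_ρ(Φ_*), J_ρ(Ψ_*))` between the `ρ`-Choi-Jamiołkowski states of two
trace-preserving CP maps (with Kraus operators `L` and `M`) does not depend on the choice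
of orthonormal basis.  `S` is the von Neumann relative entropy, assumed invariant under
unitary conjugation. -/
theorem jamiolkowski_relative_entropy_basis_independent
    {H : Type*} [NormedAddCommGroup H] [InnerProductSpace ℂ H] [CompleteSpace H]
    {K : Type*} [NormedAddCommGroup K] [InnerProductSpace ℂ K] [CompleteSpace K]
    (tp : H →ₗ[ℂ] H →ₗ[ℂ] K)
    (htp : ∀ u v u' v' : H, ⟪tp u v, tp u' v'⟫_ℂ = ⟪u, u'⟫_ℂ * ⟪v, v'⟫_ℂ)
    (hdense : (Submodule.span ℂ
        (Set.range fun uv : H × H => tp uv.1 uv.2)).topologicalClosure = ⊤)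
    {ι : Type*} (e : HilbertBasis ι ℂ H)
    (θ : H → H)
    (hadd : ∀ u v : H, θ (u + v) = θ u + θ v)
    (hsmul : ∀ (c : ℂ) (u : H), θ (c • u) = (starRingEnd ℂ c) • θ u)
    (hinner : ∀ u v : H, ⟪θ u, θ v⟫_ℂ = ⟪v, u⟫_ℂ)
    (hθe : ∀ i : ι, θ (e i) = e i)
    (ρ sq : H →L[ℂ] H) (hρ : ρ.IsPositive)
    (hρtr : HasSum (fun i : ι => ⟪e i, ρ (e i)⟫_ℂ) 1)
    (hsqpos : sq.IsPositive) (hsq : sq ∘L sq = ρ)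
    (L M : ℕ → H →L[ℂ] H)
    (hLtp : ∀ x : H, (∑' n : ℕ, ‖(L n) x‖ ^ 2) = ‖x‖ ^ 2)
    (hMtp : ∀ x : H, (∑' n : ℕ, ‖(M n) x‖ ^ 2) = ‖x‖ ^ 2)
    (U : H ≃ₗᵢ[ℂ] H)
    (JΦ JΨ JΦ' JΨ' : K →L[ℂ] K)
    (hJΦ : ∀ p q : ι × ι,
      ⟪tp (e p.1) (e p.2), JΦ (tp (e q.1) (e q.2))⟫_ℂ
        = ∑' n : ℕ, ⟪e p.2, L n (sq (e p.1))⟫_ℂ *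
            ⟪sq (e q.1), (ContinuousLinearMap.adjoint (L n)) (e q.2)⟫_ℂ)
    (hJΨ : ∀ p q : ι × ι,
      ⟪tp (e p.1) (e p.2), JΨ (tp (e q.1) (e q.2))⟫_ℂ
        = ∑' n : ℕ, ⟪e p.2, M n (sq (e p.1))⟫_ℂ *
            ⟪sq (e q.1), (ContinuousLinearMap.adjoint (M n)) (e q.2)⟫_ℂ)
    (hJΦ' : ∀ p q : ι × ι,
      ⟪tp (U (e p.1)) (U (e p.2)), JΦ' (tp (U (e q.1)) (U (e q.2)))⟫_ℂ
        = ∑' n : ℕ, ⟪U (e p.2), L n (sq (U (e p.1)))⟫_ℂ *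
            ⟪sq (U (e q.1)), (ContinuousLinearMap.adjoint (L n)) (U (e q.2))⟫_ℂ)
    (hJΨ' : ∀ p q : ι × ι,
      ⟪tp (U (e p.1)) (U (e p.2)), JΨ' (tp (U (e q.1)) (U (e q.2)))⟫_ℂ
        = ∑' n : ℕ, ⟪U (e p.2), M n (sq (U (e p.1)))⟫_ℂ *
            ⟪sq (U (e q.1)), (ContinuousLinearMap.adjoint (M n)) (U (e q.2))⟫_ℂ)
    (VK : K →L[ℂ] K)
    (hVK : ∀ u v : H, VK (tp u v) = tp (U (θ (U.symm (θ u)))) v)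
    (S : (K →L[ℂ] K) → (K →L[ℂ] K) → ℝ)
    (hS : ∀ V A B : K →L[ℂ] K,
      V ∘L (ContinuousLinearMap.adjoint V) = 1 →
      (ContinuousLinearMap.adjoint V) ∘L V = 1 →
      S (V ∘L A ∘L (ContinuousLinearMap.adjoint V))
          (V ∘L B ∘L (ContinuousLinearMap.adjoint V)) = S A B) :
    JΦ' = VK ∘L JΦ ∘L (ContinuousLinearMap.adjoint VK) ∧
      S JΦ' JΨ' = S JΦ JΨ :=
  jamiolkowski_relative_entropy_basis_independent_general tp htp hdense e θ hadd hsmul hinner hθe sq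
    L M hLtp hMtp U JΦ JΨ JΦ' JΨ' hJΦ hJΨ hJΦ' hJΨ' VK hVK S hS
end
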